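/- arXiv:2301.08178 — 2 statements merged into one kernel-verified Lean document; each statement's English description precedes it below -/
import Mathlib

section
/- Let T be a λ'-approximate summation tree for a sequence a_1,…,a_n (each node v labelled with an integer s̃(v) satisfying s(v) ≤ s̃(v) ≤ (1+λ')·s(v), where s(v) is the exact sum of the leaf labels below v). Define a new labelling by ŝ(v) = (1+λ')^{h(v)} · s̃(v) where h(v) is the height of v. Then ŝ is consistent: for every inner node v with children v_ℓ, v_r, ŝ(v_ℓ) + ŝ(v_r) ≤ ŝ(v). -/
inductive BTree where
  | leaf (a : ℝ)
  | node (l r : BTree)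

namespace BTree

def exactSum : BTree → ℝ
  | leaf a => a
  | node l r => exactSum l + exactSum r

def height : BTree → ℕ
  | leaf _ => 0
  | node l r => max (height l) (height r) + 1

inductive IsSubtree : BTree → BTree → Prop
  | refl (t : BTree) : IsSubtree t t
  | left {t l r : BTree} : IsSubtree t l → IsSubtree t (node l r)
  | right {t l r : BTree} : IsSubtree t r → IsSubtree t (node l r)

end BTree

open BTree

/-! At a node of height `h`, `s̃ ≤ (1 + λ') s` gives `(1 + λ')^h s̃ ≤ (1 + λ')^(h+1) s`, and
`s ≤ s̃ ≤ (1 + λ') s` forces `λ' s ≥ 0`, so `(1 + λ')^k s` is nondecreasing in `k`. The children of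
`v` have height less than `h(v)`, hence `ŝ(v_ℓ) + ŝ(v_r) ≤ (1 + λ')^h(v) (s(v_ℓ) + s(v_r)) =
(1 + λ')^h(v) s(v) ≤ ŝ(v)`. -/

namespace BTree.IsSubtree

theorem trans {a b c : BTree} (hab : IsSubtree a b) (hbc : IsSubtree b c) : IsSubtree a c := by
  induction hbc with
  | refl => exact hab
  | left _ ih => exact left ih
  | right _ ih => exact right ih

theorem of_node_left {l r t : BTree} (h : IsSubtree (node l r) t) : IsSubtree l t :=
  (left (refl l)).trans h

theorem of_node_right {l r t : BTree} (h : IsSubtree (node l r) t) : IsSubtree r t :=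
  (right (refl r)).trans h

end BTree.IsSubtree

section PowMul

variable {R : Type*} [CommRing R] [PartialOrder R] [IsOrderedRing R] {c s x : R}

theorem monotone_pow_mul (hc : 0 ≤ c) (hs : 0 ≤ (c - 1) * s) : Monotone fun n : ℕ => c ^ n * s :=
  monotone_nat_of_le_succ fun n => by
    have : 0 ≤ c ^ n * ((c - 1) * s) := mul_nonneg (pow_nonneg hc n) hs
    linear_combination this

theorem pow_mul_le_pow_mul_of_le_of_le_mul (hc : 0 ≤ c) (hsx : s ≤ x) (hxs : x ≤ c * s)
    {h H : ℕ} (hH : h + 1 ≤ H) : c ^ h * x ≤ c ^ H * s :=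
  calc c ^ h * x ≤ c ^ h * (c * s) := mul_le_mul_of_nonneg_left hxs (pow_nonneg hc h)
    _ = c ^ (h + 1) * s := by ring
    _ ≤ c ^ H * s := monotone_pow_mul hc (by rw [sub_one_mul, sub_nonneg]; exact hsx.trans hxs) hH

end PowMul

theorem rescaled_labels_consistent_general (lam' : ℝ) (hlam' : 0 ≤ lam') (T : BTree)
    (lbl : BTree → ℝ)
    (hlbl : ∀ t : BTree, IsSubtree t T →
      exactSum t ≤ lbl t ∧ lbl t ≤ (1 + lam') * exactSum t) :
    ∀ l r : BTree, IsSubtree (BTree.node l r) T →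
      (1 + lam') ^ height l * lbl l + (1 + lam') ^ height r * lbl r ≤
        (1 + lam') ^ height (BTree.node l r) * lbl (BTree.node l r) := by
  intro l r hlr
  have hc : 0 ≤ 1 + lam' := by linarith
  obtain ⟨hl₁, hl₂⟩ := hlbl l hlr.of_node_left
  obtain ⟨hr₁, hr₂⟩ := hlbl r hlr.of_node_right
  calc (1 + lam') ^ height l * lbl l + (1 + lam') ^ height r * lbl r
      ≤ (1 + lam') ^ height (node l r) * exactSum l +
          (1 + lam') ^ height (node l r) * exactSum r :=
        add_le_add (pow_mul_le_pow_mul_of_le_of_le_mul hc hl₁ hl₂ (by simp [height]))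
          (pow_mul_le_pow_mul_of_le_of_le_mul hc hr₁ hr₂ (by simp [height]))
    _ = (1 + lam') ^ height (node l r) * exactSum (node l r) := by rw [exactSum, mul_add]
    _ ≤ (1 + lam') ^ height (node l r) * lbl (node l r) :=
        mul_le_mul_of_nonneg_left (hlbl _ hlr).1 (pow_nonneg hc _)

theorem rescaled_labels_consistent (lam' : ℝ) (hlam' : 0 ≤ lam') (T : BTree)
    (lbl : BTree → ℝ)
    (hleaf : ∀ a : ℝ, IsSubtree (BTree.leaf a) T → 0 ≤ a)
    (hlbl : ∀ t : BTree, IsSubtree t T →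
      exactSum t ≤ lbl t ∧ lbl t ≤ (1 + lam') * exactSum t) :
    ∀ l r : BTree, IsSubtree (BTree.node l r) T →
      (1 + lam') ^ height l * lbl l + (1 + lam') ^ height r * lbl r ≤
        (1 + lam') ^ height (BTree.node l r) * lbl (BTree.node l r) :=
  rescaled_labels_consistent_general lam' hlam' T lbl hlbl
end

section
/- Suppose arrays B_k (for k = 1..m) contain consistent λ'-approximate prefix sums for blocks A_k of lengths L each, C is the sequence with C[1] = 0 and C[k] = B_{k−1}[L] for k ≥ 2, D contains consistent λ'-approximate prefix sums for C, and B is defined by B[i] = B_{k_i}[i'] + D[k_i] where i = L·(k_i − 1) + i'. If (1+λ')^2 ≤ 1+λ, then B contains consistent λ-approximate prefix sums for the concatenation A of the blocks A_1,…,A_m. -/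
/-!
Entry `L * q + j` of the concatenation lies in block `q + 1`, and its approximation
`B (q + 1) j + D (q + 1)` splits accordingly: `B (q + 1) j` is within `1 + λ'` of the partial
sum of that block, while `D (q + 1)` is within `1 + λ'` of `∑_{t ≤ q} B t L`, each term of
which is within `1 + λ'` of a block total, so `D (q + 1)` is within `(1 + λ')²` of the sum of
the preceding blocks. Consistency inside a block is that of `B (q + 1)`; at a block boundary
the increase of `D`, at least `C (q + 1) = B q L`, pays for `B` starting afresh.
-/

def ConsistentApproxPrefixSums (lam : ℝ) (N : ℕ) (a s : ℕ → ℕ) : Prop :=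
  (∀ i, 1 ≤ i → i ≤ N →
    ((∑ j ∈ Finset.Icc 1 i, a j : ℕ) : ℝ) ≤ (s i : ℝ) ∧
    (s i : ℝ) ≤ (1 + lam) * ((∑ j ∈ Finset.Icc 1 i, a j : ℕ) : ℝ)) ∧
  (∀ i, 2 ≤ i → i ≤ N → s (i - 1) + a i ≤ s i) ∧
  a 1 ≤ s 1

open Finset

theorem Finset.sum_Icc_one_add {M : Type*} [AddCommMonoid M] (f : ℕ → M) (n k : ℕ) :
    ∑ i ∈ Icc 1 (n + k), f i = ∑ i ∈ Icc 1 n, f i + ∑ i ∈ Icc 1 k, f (n + i) := by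
  induction k with
  | zero => simp
  | succ k ih =>
    rw [← add_assoc, sum_Icc_succ_top (by omega), ih, sum_Icc_succ_top (by omega), add_assoc]
    rfl

theorem add_le_mul_add_of_le_mul_of_le_sq_mul {lam lam' x y b d : ℝ} (hlam' : 0 ≤ lam')
    (hcomp : (1 + lam') ^ 2 ≤ 1 + lam) (hx : 0 ≤ x) (hy : 0 ≤ y)
    (hb : b ≤ (1 + lam') * y) (hd : d ≤ (1 + lam') ^ 2 * x) : b + d ≤ (1 + lam) * (x + y) := by
  have : 1 + lam' ≤ (1 + lam') ^ 2 := by nlinarith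
  nlinarith

/-- The concatenation of the blocks `A 1, A 2, …` of length `L`, indexed from `1`. -/
def blockConcat (L : ℕ) (A : ℕ → ℕ → ℕ) (i : ℕ) : ℕ :=
  A ((i - 1) / L + 1) ((i - 1) % L + 1)

theorem blockConcat_mul_add {L : ℕ} (A : ℕ → ℕ → ℕ) (q : ℕ) {j : ℕ} (hj : 1 ≤ j) (hjL : j ≤ L) :
    blockConcat L A (L * q + j) = A (q + 1) j := by
  have hL : 0 < L := by omega
  have hdiv : (L * q + j - 1) / L = q := by
    rw [Nat.add_sub_assoc hj, Nat.mul_add_div hL, Nat.div_eq_of_lt (by omega), add_zero]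
  have hmod : (L * q + j - 1) % L = j - 1 := by
    rw [Nat.add_sub_assoc hj, Nat.mul_add_mod, Nat.mod_eq_of_lt (by omega)]
  simp only [blockConcat, hdiv, hmod, Nat.sub_add_cancel hj]

theorem blockConcat_one (L : ℕ) (A : ℕ → ℕ → ℕ) : blockConcat L A 1 = A 1 1 := by
  simp [blockConcat]

theorem exists_eq_mul_add_of_le_mul {i m L : ℕ} (hi : 1 ≤ i) (hiN : i ≤ m * L) :
    ∃ q j, q < m ∧ 1 ≤ j ∧ j ≤ L ∧ i = L * q + j := by
  have hL : 0 < L := Nat.pos_of_ne_zero (by rintro rfl; omega)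
  refine ⟨(i - 1) / L, (i - 1) % L + 1, ?_, by omega, Nat.mod_lt _ hL, ?_⟩
  · exact (Nat.div_lt_iff_lt_mul hL).2 (by omega)
  · have := Nat.div_add_mod (i - 1) L
    omega

theorem sum_Icc_blockConcat (L : ℕ) (A : ℕ → ℕ → ℕ) (q : ℕ) {j : ℕ} (hjL : j ≤ L) :
    ∑ i ∈ Icc 1 (L * q + j), blockConcat L A i =
      ∑ t ∈ Icc 1 q, ∑ i ∈ Icc 1 L, A t i + ∑ i ∈ Icc 1 j, A (q + 1) i := by
  induction q generalizing j with
  | zero =>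
    simp only [mul_zero, zero_add, Icc_eq_empty_of_lt zero_lt_one, sum_empty]
    refine sum_congr rfl fun i hi ↦ ?_
    rw [mem_Icc] at hi
    simpa using blockConcat_mul_add A 0 hi.1 (hi.2.trans hjL)
  | succ q ih =>
    rw [mul_add_one, sum_Icc_one_add, ih le_rfl, ← sum_Icc_succ_top (by omega)]
    congr 1
    refine sum_congr rfl fun i hi ↦ ?_
    rw [mem_Icc] at hi
    rw [← mul_add_one, blockConcat_mul_add A _ hi.1 (hi.2.trans hjL)]

theorem sum_Icc_succ_eq_of_eq_pred {m q : ℕ} {C g : ℕ → ℕ} (hC1 : C 1 = 0)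
    (hC : ∀ k, 2 ≤ k → k ≤ m → C k = g (k - 1)) (hq : q < m) :
    ∑ t ∈ Icc 1 (q + 1), C t = ∑ t ∈ Icc 1 q, g t := by
  rw [add_comm, sum_Icc_one_add, Icc_self, sum_singleton, hC1, zero_add]
  refine sum_congr rfl fun t ht ↦ ?_
  have ht := mem_Icc.1 ht
  rw [hC (1 + t) (by omega) (by omega), Nat.add_sub_cancel_left]

namespace ConsistentApproxPrefixSums

variable {lam : ℝ} {N i : ℕ} {a s : ℕ → ℕ}

theorem sum_le (h : ConsistentApproxPrefixSums lam N a s) (hi : 1 ≤ i) (hiN : i ≤ N) :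
    ∑ j ∈ Icc 1 i, a j ≤ s i := by
  exact_mod_cast (h.1 i hi hiN).1

theorem le_mul_sum (h : ConsistentApproxPrefixSums lam N a s) (hi : 1 ≤ i) (hiN : i ≤ N) :
    (s i : ℝ) ≤ (1 + lam) * ∑ j ∈ Icc 1 i, (a j : ℝ) := by
  exact_mod_cast (h.1 i hi hiN).2

end ConsistentApproxPrefixSums

section Blocks

variable {lam lam' : ℝ} {m L q j : ℕ} {A B : ℕ → ℕ → ℕ} {C D : ℕ → ℕ}

theorem sum_blockConcat_le
    (hB : ∀ k, 1 ≤ k → k ≤ m → ConsistentApproxPrefixSums lam' L (A k) (B k))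
    (hC1 : C 1 = 0) (hCk : ∀ k, 2 ≤ k → k ≤ m → C k = B (k - 1) L)
    (hD : ConsistentApproxPrefixSums lam' m C D) (hq : q < m) (hj1 : 1 ≤ j) (hjL : j ≤ L) :
    ∑ i ∈ Icc 1 (L * q + j), blockConcat L A i ≤ B (q + 1) j + D (q + 1) := by
  rw [sum_Icc_blockConcat L A q hjL]
  have hblocks : ∑ t ∈ Icc 1 q, ∑ i ∈ Icc 1 L, A t i ≤ ∑ t ∈ Icc 1 q, B t L :=
    sum_le_sum fun t ht ↦
      (hB t (mem_Icc.1 ht).1 ((mem_Icc.1 ht).2.trans hq.le)).sum_le (by omega) le_rfl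
  have hDq : ∑ t ∈ Icc 1 q, B t L ≤ D (q + 1) :=
    sum_Icc_succ_eq_of_eq_pred (g := fun t ↦ B t L) hC1 hCk hq ▸ hD.sum_le (by omega) hq
  have hBj := (hB (q + 1) (by omega) hq).sum_le hj1 hjL
  omega

theorem blockConcat_le_mul_sum (hlam' : 0 ≤ lam') (hcomp : (1 + lam') ^ 2 ≤ 1 + lam)
    (hB : ∀ k, 1 ≤ k → k ≤ m → ConsistentApproxPrefixSums lam' L (A k) (B k))
    (hC1 : C 1 = 0) (hCk : ∀ k, 2 ≤ k → k ≤ m → C k = B (k - 1) L)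
    (hD : ConsistentApproxPrefixSums lam' m C D) (hq : q < m) (hj1 : 1 ≤ j) (hjL : j ≤ L) :
    ((B (q + 1) j + D (q + 1) : ℕ) : ℝ) ≤
      (1 + lam) * ((∑ i ∈ Icc 1 (L * q + j), blockConcat L A i : ℕ) : ℝ) := by
  rw [sum_Icc_blockConcat L A q hjL]
  push_cast
  have hblocks : ∑ t ∈ Icc 1 q, (B t L : ℝ) ≤
      (1 + lam') * ∑ t ∈ Icc 1 q, ∑ i ∈ Icc 1 L, (A t i : ℝ) := by
    rw [mul_sum]
    exact sum_le_sum fun t ht ↦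
      (hB t (mem_Icc.1 ht).1 ((mem_Icc.1 ht).2.trans hq.le)).le_mul_sum (by omega) le_rfl
  have hDq : (D (q + 1) : ℝ) ≤ (1 + lam') ^ 2 * ∑ t ∈ Icc 1 q, ∑ i ∈ Icc 1 L, (A t i : ℝ) :=
    calc (D (q + 1) : ℝ)
      _ ≤ (1 + lam') * ∑ t ∈ Icc 1 (q + 1), (C t : ℝ) := hD.le_mul_sum (by omega) hq
      _ = (1 + lam') * ∑ t ∈ Icc 1 q, (B t L : ℝ) := by
        exact_mod_cast congrArg (fun n : ℕ ↦ (1 + lam') * (n : ℝ))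
          (sum_Icc_succ_eq_of_eq_pred (g := fun t ↦ B t L) hC1 hCk hq)
      _ ≤ (1 + lam') * ((1 + lam') * ∑ t ∈ Icc 1 q, ∑ i ∈ Icc 1 L, (A t i : ℝ)) := by
        gcongr
      _ = _ := by ring
  exact add_le_mul_add_of_le_mul_of_le_sq_mul hlam' hcomp (by positivity) (by positivity)
    ((hB (q + 1) (by omega) hq).le_mul_sum hj1 hjL) hDq

theorem blockConcat_add_le {i : ℕ}
    (hB : ∀ k, 1 ≤ k → k ≤ m → ConsistentApproxPrefixSums lam' L (A k) (B k))
    (hCk : ∀ k, 2 ≤ k → k ≤ m → C k = B (k - 1) L)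
    (hD : ConsistentApproxPrefixSums lam' m C D) (hi : 2 ≤ i) (hiN : i ≤ m * L) :
    blockConcat L (fun k j ↦ B k j + D k) (i - 1) + blockConcat L A i ≤
      blockConcat L (fun k j ↦ B k j + D k) i := by
  obtain ⟨q, j, hq, hj1, hjL, rfl⟩ := exists_eq_mul_add_of_le_mul (by omega) hiN
  rw [blockConcat_mul_add _ q hj1 hjL, blockConcat_mul_add _ q hj1 hjL]
  obtain rfl | hj2 : j = 1 ∨ 2 ≤ j := by omega
  · obtain ⟨p, rfl⟩ : ∃ p, q = p + 1 := Nat.exists_eq_succ_of_ne_zero (by rintro rfl; omega)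
    rw [show L * (p + 1) + 1 - 1 = L * p + L by ring_nf; omega,
      blockConcat_mul_add _ p (by omega) le_rfl]
    have hDstep : D (p + 1) + C (p + 1 + 1) ≤ D (p + 1 + 1) := hD.2.1 (p + 1 + 1) (by omega) hq
    have hC : C (p + 1 + 1) = B (p + 1) L := hCk (p + 1 + 1) (by omega) hq
    have hA : A (p + 1 + 1) 1 ≤ B (p + 1 + 1) 1 := (hB (p + 1 + 1) (by omega) hq).2.2
    omega
  · rw [show L * q + j - 1 = L * q + (j - 1) by omega,
      blockConcat_mul_add _ q (by omega) (by omega)]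
    have := (hB (q + 1) (by omega) hq).2.1 j hj2 hjL
    omega

end Blocks

theorem combined_prefix_sums_general (lam lam' : ℝ) (hlam' : 0 < lam')
    (hcomp : (1 + lam') ^ 2 ≤ 1 + lam)
    (m L : ℕ) (hm : 1 ≤ m)
    (A B : ℕ → ℕ → ℕ) (C D : ℕ → ℕ)
    (hB : ∀ k, 1 ≤ k → k ≤ m → ConsistentApproxPrefixSums lam' L (A k) (B k))
    (hC1 : C 1 = 0)
    (hCk : ∀ k, 2 ≤ k → k ≤ m → C k = B (k - 1) L)
    (hD : ConsistentApproxPrefixSums lam' m C D) :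
    ConsistentApproxPrefixSums lam (m * L)
      (fun i => A ((i - 1) / L + 1) ((i - 1) % L + 1))
      (fun i => B ((i - 1) / L + 1) ((i - 1) % L + 1) + D ((i - 1) / L + 1)) := by
  change ConsistentApproxPrefixSums lam (m * L) (blockConcat L A)
    (blockConcat L fun k j ↦ B k j + D k)
  refine ⟨fun i hi hiN ↦ ?_, fun i hi hiN ↦ blockConcat_add_le hB hCk hD hi hiN, ?_⟩
  · obtain ⟨q, j, hq, hj1, hjL, rfl⟩ := exists_eq_mul_add_of_le_mul hi hiN
    rw [blockConcat_mul_add _ q hj1 hjL]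
    exact ⟨mod_cast sum_blockConcat_le hB hC1 hCk hD hq hj1 hjL,
      blockConcat_le_mul_sum hlam'.le hcomp hB hC1 hCk hD hq hj1 hjL⟩
  · rw [blockConcat_one, blockConcat_one]
    exact (hB 1 le_rfl hm).2.2.trans (Nat.le_add_right _ _)

theorem combined_prefix_sums (lam lam' : ℝ) (hlam : 0 < lam) (hlam' : 0 < lam')
    (hcomp : (1 + lam') ^ 2 ≤ 1 + lam)
    (m L : ℕ) (hm : 1 ≤ m) (hL : 1 ≤ L)
    (A B : ℕ → ℕ → ℕ) (C D : ℕ → ℕ)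
    (hB : ∀ k, 1 ≤ k → k ≤ m → ConsistentApproxPrefixSums lam' L (A k) (B k))
    (hC1 : C 1 = 0)
    (hCk : ∀ k, 2 ≤ k → k ≤ m → C k = B (k - 1) L)
    (hD : ConsistentApproxPrefixSums lam' m C D) :
    ConsistentApproxPrefixSums lam (m * L)
      (fun i => A ((i - 1) / L + 1) ((i - 1) % L + 1))
      (fun i => B ((i - 1) / L + 1) ((i - 1) % L + 1) + D ((i - 1) / L + 1)) :=
  combined_prefix_sums_general lam lam' hlam' hcomp m L hm A B C D hB hC1 hCk hD
end
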